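/- For a digraph D and distinct ends ω, η of D, the following are equivalent: (i) D has a limit edge from ω to η; (ii) there exist disjoint necklaces N_ω and N_η representing ω and η respectively such that for every n the n-th bead of N_ω sends an edge to the n-th bead of N_η. -/

import Mathlib

variable {V : Type*}

/-- Reachability from `a` to `b` by a directed walk staying inside the vertex set `S`. -/
def ReachIn (D : V → V → Prop) (S : Set V) (a b : V) : Prop :=
  a ∈ S ∧ b ∈ S ∧ Relation.ReflTransGen (fun x y => y ∈ S ∧ D x y) a b

/-- `C` is a strong component of the subdigraph of `D` induced on `S`. -/
def IsSCCIn (D : V → V → Prop) (S : Set V) (C : Set V) : Prop :=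
  ∃ a ∈ S, C = {b | ReachIn D S a b ∧ ReachIn D S b a}

/-- A directed ray in `D`. -/
def IsRay (D : V → V → Prop) (R : ℕ → V) : Prop :=
  Function.Injective R ∧ ∀ n, D (R n) (R (n + 1))

/-- A reverse directed ray in `D`. -/
def IsRevRay (D : V → V → Prop) (R : ℕ → V) : Prop :=
  Function.Injective R ∧ ∀ n, D (R (n + 1)) (R n)

/-- The ray `R` has a tail inside the vertex set `C`. -/
def HasTailIn (R : ℕ → V) (C : Set V) : Prop :=
  ∃ n, ∀ m, n ≤ m → R m ∈ C

/-- A solid ray: for every finite `X` it has a tail in some strong component of `D − X`. -/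
def Solid (D : V → V → Prop) (R : ℕ → V) : Prop :=
  IsRay D R ∧ ∀ X : Finset V, ∃ C, IsSCCIn D ((↑X : Set V)ᶜ) C ∧ HasTailIn R C

/-- Two solid rays are end-equivalent: for every finite `X` they have tails in the same
strong component of `D − X`. -/
def EndEquiv (D : V → V → Prop) (R R' : ℕ → V) : Prop :=
  ∀ X : Finset V, ∃ C, IsSCCIn D ((↑X : Set V)ᶜ) C ∧ HasTailIn R C ∧ HasTailIn R' C

/-- `Ω` is an end of `D`: the class of solid rays equivalent to some solid ray. -/
def IsEnd (D : V → V → Prop) (Ω : Set (ℕ → V)) : Prop :=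
  ∃ R, Solid D R ∧ Ω = {R' | Solid D R' ∧ EndEquiv D R R'}

/-- A (nonempty) directed path, recorded as its list of vertices. -/
def IsPathList (D : V → V → Prop) (l : List V) : Prop :=
  l ≠ [] ∧ l.Nodup ∧ l.Chain' D

/-- Infinitely many pairwise disjoint `A`–`B` paths in `D` (each meeting `A` precisely in its
first vertex and `B` precisely in its last vertex). -/
def DisjointPathsFrom (D : V → V → Prop) (A B : Set V) : Prop :=
  ∃ P : ℕ → List V,
    (∀ k, IsPathList D (P k)) ∧
    (∀ j k, j ≠ k → ∀ x ∈ P j, x ∉ P k) ∧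
    (∀ k, ∃ a, (P k).head? = some a ∧ a ∈ A) ∧
    (∀ k, ∃ b, (P k).getLast? = some b ∧ b ∈ B) ∧
    (∀ k, ∀ x ∈ (P k).tail, x ∉ A) ∧
    (∀ k, ∀ x ∈ (P k).dropLast, x ∉ B)

/-- A necklace in `D`: an inflated symmetric ray with finite branch sets (beads), given by its
beads together with the connecting (subdividing) paths in both directions. -/
structure Necklace (D : V → V → Prop) where
  bead : ℕ → Set V
  fwd : ℕ → List V
  bwd : ℕ → List V
  bead_fin : ∀ n, (bead n).Finite
  bead_nonempty : ∀ n, (bead n).Nonempty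
  bead_disj : ∀ m n, m ≠ n → Disjoint (bead m) (bead n)
  bead_strong : ∀ n, ∀ a ∈ bead n, ∀ b ∈ bead n, ReachIn D (bead n) a b
  fwd_path : ∀ n, IsPathList D (fwd n)
  bwd_path : ∀ n, IsPathList D (bwd n)
  fwd_head : ∀ n a, (fwd n).head? = some a → a ∈ bead n
  fwd_last : ∀ n b, (fwd n).getLast? = some b → b ∈ bead (n + 1)
  bwd_head : ∀ n a, (bwd n).head? = some a → a ∈ bead (n + 1)
  bwd_last : ∀ n b, (bwd n).getLast? = some b → b ∈ bead n
  fwd_inner : ∀ n, ∀ x ∈ (fwd n).tail.dropLast, ∀ m, x ∉ bead m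
  bwd_inner : ∀ n, ∀ x ∈ (bwd n).tail.dropLast, ∀ m, x ∉ bead m
  fwd_fwd_disj : ∀ m n, m ≠ n → ∀ x ∈ (fwd m).tail.dropLast, x ∉ (fwd n).tail.dropLast
  bwd_bwd_disj : ∀ m n, m ≠ n → ∀ x ∈ (bwd m).tail.dropLast, x ∉ (bwd n).tail.dropLast
  fwd_bwd_disj : ∀ m n, ∀ x ∈ (fwd m).tail.dropLast, x ∉ (bwd n).tail.dropLast

/-- The vertex set of a necklace. -/
def Necklace.verts {D : V → V → Prop} (N : Necklace D) : Set V :=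
  (⋃ n, N.bead n) ∪ {x | ∃ n, x ∈ N.fwd n ∨ x ∈ N.bwd n}

/-- A necklace is attached to `𝒰` if infinitely many of its beads meet every set in `𝒰`. -/
def Necklace.AttachedTo {D : V → V → Prop} (N : Necklace D) (𝒰 : Finset (Set V)) : Prop :=
  {n | ∀ U ∈ 𝒰, (N.bead n ∩ U).Nonempty}.Infinite

/-- A necklace represents the end of the solid ray `R`: for every finite `X`, all but finitely
many beads lie in the strong component of `D − X` in which `R` has a tail. -/
def NecklaceRepresents {D : V → V → Prop} (N : Necklace D) (R : ℕ → V) : Prop :=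
  ∀ X : Finset V, ∃ C, IsSCCIn D ((↑X : Set V)ᶜ) C ∧ HasTailIn R C ∧
    ∃ n₀, ∀ n, n₀ ≤ n → N.bead n ⊆ C

/-- `URankLE D 𝒰 S α`: the subdigraph of `D` induced on `S` has `𝒰`-rank at most `α`. -/
inductive URankLE (D : V → V → Prop) (𝒰 : Finset (Set V)) : Set V → Ordinal → Prop
  | base (S : Set V) (α : Ordinal) (U : Set V) (hU : U ∈ 𝒰) (h : (U ∩ S).Finite) :
      URankLE D 𝒰 S α
  | step (S : Set V) (α : Ordinal) (X : Finset V) (r : Set V → Ordinal)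
      (hr : ∀ C, IsSCCIn D (S \ ↑X) C → r C < α)
      (h : ∀ C, IsSCCIn D (S \ ↑X) C → URankLE D 𝒰 C (r C)) :
      URankLE D 𝒰 S α

/-- `D` (induced on `S`) has `𝒰`-rank exactly `α`. -/
def HasURank (D : V → V → Prop) (𝒰 : Finset (Set V)) (S : Set V) (α : Ordinal) : Prop :=
  URankLE D 𝒰 S α ∧ ∀ β < α, ¬ URankLE D 𝒰 S β

/-- A vertex-direction of `D`. -/
def IsVertexDirection (D : V → V → Prop) (f : Finset V → Set V) : Prop :=
  (∀ X : Finset V, IsSCCIn D ((↑X : Set V)ᶜ) (f X)) ∧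
  ∀ X Y : Finset V, X ⊆ Y → f Y ⊆ f X

/-- A separation `(A,B)` of `D`: `A ∪ B = V(D)` and no edge from `B∖A` to `A∖B`. -/
def IsSep (D : V → V → Prop) (A B : Set V) : Prop :=
  A ∪ B = Set.univ ∧ ∀ a ∈ B \ A, ∀ b ∈ A \ B, ¬ D a b

/-- A finite order separation `(A,B)` points towards the vertex-direction `f`. -/
def PointsTowards (D : V → V → Prop) (f : Finset V → Set V) (A B : Set V)
    (h : (A ∩ B).Finite) : Prop :=
  f h.toFinset ⊆ B \ A

/-- A finite order separation `(A,B)` points away from the vertex-direction `f`. -/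
def PointsAway (D : V → V → Prop) (f : Finset V → Set V) (A B : Set V)
    (h : (A ∩ B).Finite) : Prop :=
  f h.toFinset ⊆ A \ B

/-- The vertex `v` dominates the vertex-direction `f`. -/
def DomDir (D : V → V → Prop) (v : V) (f : Finset V → Set V) : Prop :=
  ∀ A B, IsSep D A B → ∀ h : (A ∩ B).Finite, PointsAway D f A B h → v ∈ A

/-- An infinite `v`–`B` fan: infinitely many `v`–`B` paths meeting pairwise precisely in `v`. -/
def Fan (D : V → V → Prop) (v : V) (B : Set V) : Prop :=
  ∃ P : ℕ → List V,
    (∀ k, IsPathList D (P k)) ∧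
    (∀ k, (P k).head? = some v) ∧
    (∀ k, 2 ≤ (P k).length) ∧
    (∀ k, ∃ b, (P k).getLast? = some b ∧ b ∈ B) ∧
    (∀ k, ∀ x ∈ (P k).dropLast, x ∉ B) ∧
    (∀ j k, j ≠ k → ∀ x ∈ (P j).tail, x ∉ (P k).tail)

/-- Limit edge between the ends of the solid rays `R` and `R'`. -/
def LimitEdgeEE (D : V → V → Prop) (R R' : ℕ → V) : Prop :=
  ∀ (X : Finset V) C C', IsSCCIn D ((↑X : Set V)ᶜ) C → HasTailIn R C →
    IsSCCIn D ((↑X : Set V)ᶜ) C' → HasTailIn R' C' → C ≠ C' →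
    ∃ a ∈ C, ∃ b ∈ C', D a b

/-- Limit edge from the vertex `v` to the end of the solid ray `R`. -/
def LimitEdgeVE (D : V → V → Prop) (v : V) (R : ℕ → V) : Prop :=
  ∀ (X : Finset V) C, IsSCCIn D ((↑X : Set V)ᶜ) C → HasTailIn R C → v ∉ C →
    ∃ b ∈ C, D v b

/-- Limit edge from the end of the solid ray `R` to the vertex `v`. -/
def LimitEdgeEV (D : V → V → Prop) (R : ℕ → V) (v : V) : Prop :=
  ∀ (X : Finset V) C, IsSCCIn D ((↑X : Set V)ᶜ) C → HasTailIn R C → v ∉ C →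
    ∃ a ∈ C, D a v

/-- A subdivided infinite out-star in `D` with centre `c`, given by its paths. -/
def IsStar (D : V → V → Prop) (c : V) (P : ℕ → List V) : Prop :=
  (∀ k, IsPathList D (P k)) ∧ (∀ k, (P k).head? = some c) ∧
  (∀ k, 2 ≤ (P k).length) ∧
  (∀ j k, j ≠ k → ∀ x ∈ (P j).tail, x ∉ (P k).tail)

/-- A directed comb in `D` with spine `R`, given by its (pairwise disjoint) paths each meeting
`R` precisely in its first vertex. -/
def IsComb (D : V → V → Prop) (R : ℕ → V) (P : ℕ → List V) : Prop :=
  IsRay D R ∧ (∀ k, IsPathList D (P k)) ∧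
  (∀ k, ∃ n, (P k).head? = some (R n)) ∧
  (∀ k, ∀ x ∈ (P k).tail, ∀ n, x ≠ R n) ∧
  (∀ j k, j ≠ k → ∀ x ∈ P j, x ∉ P k)

/-- A star in `D` whose `k`-th leaf is `a k`. -/
def StarAttachedWith (D : V → V → Prop) (a : ℕ → V) : Prop :=
  ∃ c P, IsStar D c P ∧ ∀ k, (P k).getLast? = some (a k)

/-- A comb in `D` whose `k`-th tooth is `a k`. -/
def CombAttachedWith (D : V → V → Prop) (a : ℕ → V) : Prop :=
  ∃ R P, IsComb D R P ∧ ∀ k, (P k).getLast? = some (a k)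

/-- `a` and `b` are consecutive entries of the list `l`. -/
def AdjInList (l : List V) (a b : V) : Prop :=
  ∃ l₁ l₂, l = l₁ ++ a :: b :: l₂

/-- The edge relation of (a subdigraph of `D` forming) the necklace `N`: all `D`-edges inside a
bead together with the edges of the connecting paths. -/
def Necklace.edges {D : V → V → Prop} (N : Necklace D) (a b : V) : Prop :=
  D a b ∧ ((∃ n, a ∈ N.bead n ∧ b ∈ N.bead n) ∨
    (∃ n, AdjInList (N.fwd n) a b ∨ AdjInList (N.bwd n) a b))

/-- A generalized ray: a directed ray (`true`) or a reverse directed ray (`false`). -/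
def IsGenRay (D : V → V → Prop) : Bool × (ℕ → V) → Prop
  | (true, R) => IsRay D R
  | (false, R) => IsRevRay D R

/-- Pre-end equivalence of generalized rays: infinitely many disjoint paths in both
directions. -/
def PreEquiv (D : V → V → Prop) (Q Q' : Bool × (ℕ → V)) : Prop :=
  DisjointPathsFrom D (Set.range Q.2) (Set.range Q'.2) ∧
  DisjointPathsFrom D (Set.range Q'.2) (Set.range Q.2)

/-- The pre-end `γ` includes the end represented by the solid ray `R`. -/
def IncludesEnd (D : V → V → Prop) (γ : Set (Bool × (ℕ → V))) (R : ℕ → V) : Prop :=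
  Solid D R ∧ ∀ R', Solid D R' → EndEquiv D R R' → (true, R') ∈ γ

/-- The set of edges of `D` from `A` to `B`. -/
def EdgesBetween (D : V → V → Prop) (A B : Set V) : Set (V × V) :=
  {e | D e.1 e.2 ∧ e.1 ∈ A ∧ e.2 ∈ B}

/-- A bundle of `D − X`. -/
def IsBundle (D : V → V → Prop) (X : Finset V) (E : Set (V × V)) : Prop :=
  E.Nonempty ∧
  ((∃ C C', IsSCCIn D ((↑X : Set V)ᶜ) C ∧ IsSCCIn D ((↑X : Set V)ᶜ) C' ∧ C ≠ C' ∧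
      E = EdgesBetween D C C') ∨
   (∃ v ∈ X, ∃ C, IsSCCIn D ((↑X : Set V)ᶜ) C ∧
      (E = EdgesBetween D {v} C ∨ E = EdgesBetween D C {v})))

/-- Compatibility `f(X) ⊇ f(Y)` between values of a direction (a strong component is regarded
as containing a bundle if it contains all its edges). -/
def DirCompat : Set V ⊕ Set (V × V) → Set V ⊕ Set (V × V) → Prop
  | Sum.inl C, Sum.inl C' => C' ⊆ C
  | Sum.inl C, Sum.inr E' => ∀ e ∈ E', e.1 ∈ C ∧ e.2 ∈ C
  | Sum.inr _, Sum.inl _ => False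
  | Sum.inr E, Sum.inr E' => E' ⊆ E

/-- A direction of `D`: maps each finite `X` to a strong component or a bundle of `D − X`,
compatibly. -/
def IsDirection (D : V → V → Prop) (f : Finset V → Set V ⊕ Set (V × V)) : Prop :=
  (∀ X : Finset V, (∃ C, IsSCCIn D ((↑X : Set V)ᶜ) C ∧ f X = Sum.inl C) ∨
    (∃ E, IsBundle D X E ∧ f X = Sum.inr E)) ∧
  ∀ X Y : Finset V, X ⊆ Y → DirCompat (f X) (f Y)

/-- An edge-direction: a direction whose value is a bundle for some finite `X`. -/
def IsEdgeDirection (D : V → V → Prop) (f : Finset V → Set V ⊕ Set (V × V)) : Prop :=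
  IsDirection D f ∧ ∃ (X : Finset V) (E : Set (V × V)), f X = Sum.inr E

/-- The three kinds of (potential) limit edges: end–end, vertex–end, end–vertex.
Ends are given as sets of (solid) rays. -/
inductive LimitEdgeObj (V : Type*) where
  | ee (Ω₁ Ω₂ : Set (ℕ → V))
  | ve (v : V) (Ω : Set (ℕ → V))
  | ev (Ω : Set (ℕ → V)) (v : V)

/-- `l` is a limit edge of `D`. -/
def IsLimitEdge (D : V → V → Prop) : LimitEdgeObj V → Prop
  | LimitEdgeObj.ee Ω₁ Ω₂ => IsEnd D Ω₁ ∧ IsEnd D Ω₂ ∧ Ω₁ ≠ Ω₂ ∧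
      ∀ R ∈ Ω₁, ∀ R' ∈ Ω₂, LimitEdgeEE D R R'
  | LimitEdgeObj.ve v Ω => IsEnd D Ω ∧ ∀ R ∈ Ω, LimitEdgeVE D v R
  | LimitEdgeObj.ev Ω v => IsEnd D Ω ∧ ∀ R ∈ Ω, LimitEdgeEV D R v

/-- `f` agrees with the map `f_λ` for the end–end limit edge `Ω₁Ω₂`. -/
def AgreesEE (D : V → V → Prop) (Ω₁ Ω₂ : Set (ℕ → V))
    (f : Finset V → Set V ⊕ Set (V × V)) : Prop :=
  ∀ (X : Finset V), ∀ R ∈ Ω₁, ∀ R' ∈ Ω₂, ∀ C C',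
    IsSCCIn D ((↑X : Set V)ᶜ) C → HasTailIn R C →
    IsSCCIn D ((↑X : Set V)ᶜ) C' → HasTailIn R' C' →
    (C = C' → f X = Sum.inl C) ∧ (C ≠ C' → f X = Sum.inr (EdgesBetween D C C'))

/-- `f` agrees with the map `f_λ` for the vertex–end limit edge `vΩ`. -/
def AgreesVE (D : V → V → Prop) (v : V) (Ω : Set (ℕ → V))
    (f : Finset V → Set V ⊕ Set (V × V)) : Prop :=
  ∀ (X : Finset V), ∀ R ∈ Ω, ∀ C, IsSCCIn D ((↑X : Set V)ᶜ) C → HasTailIn R C →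
    (v ∈ C → f X = Sum.inl C) ∧
    (v ∈ (↑X : Set V) → f X = Sum.inr (EdgesBetween D {v} C)) ∧
    (∀ C', IsSCCIn D ((↑X : Set V)ᶜ) C' → v ∈ C' → C' ≠ C →
      f X = Sum.inr (EdgesBetween D C' C))

/-- `f` agrees with the map `f_λ` for the end–vertex limit edge `Ωv`. -/
def AgreesEV (D : V → V → Prop) (Ω : Set (ℕ → V)) (v : V)
    (f : Finset V → Set V ⊕ Set (V × V)) : Prop :=
  ∀ (X : Finset V), ∀ R ∈ Ω, ∀ C, IsSCCIn D ((↑X : Set V)ᶜ) C → HasTailIn R C →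
    (v ∈ C → f X = Sum.inl C) ∧
    (v ∈ (↑X : Set V) → f X = Sum.inr (EdgesBetween D C {v})) ∧
    (∀ C', IsSCCIn D ((↑X : Set V)ᶜ) C' → v ∈ C' → C' ≠ C →
      f X = Sum.inr (EdgesBetween D C C'))

/-- `f` agrees with `f_λ` for the limit edge `l`. -/
def Agrees (D : V → V → Prop) : LimitEdgeObj V → (Finset V → Set V ⊕ Set (V × V)) → Prop
  | LimitEdgeObj.ee Ω₁ Ω₂, f => AgreesEE D Ω₁ Ω₂ f
  | LimitEdgeObj.ve v Ω, f => AgreesVE D v Ω f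
  | LimitEdgeObj.ev Ω v, f => AgreesEV D Ω v f

/-!
Fix a finite `X₀` separating the two ends. Recursively choose finite separators
`X₀ = Z₀ ⊆ Z₁ ⊆ ⋯` and, on each side, a finite strongly connected pre-bead
`Pₙ ⊆ C(Zₙ)` containing a vertex of the ray, such that the limit edge (applied to `Zₙ`)
supplies an edge from `Pₙ^ω` to `Pₙ^η`. Taking `Zₙ₊₁ ⊇ Zₙ ∪ Pₙ^ω ∪ Pₙ^η`, the `n`-th bead
grows from `Pₙ` inside the layer `C(Zₙ) \ C(Zₙ₊₁)` and is joined to `Pₙ₊₁` by two paths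
through that layer. Distinct layers are disjoint, which gives all disjointness conditions of
a necklace, and the two necklaces lie in the disjoint components `C(X₀, ω)`, `C(X₀, η)`.
Conversely, the beads of representing necklaces eventually lie in `C(X, ω)` and `C(X, η)`,
so the edges between equally indexed beads are edges between these components.
-/

open Set Relation Function Filter

def StronglyConnectedOn (D : V → V → Prop) (S : Set V) : Prop :=
  ∀ a ∈ S, ∀ b ∈ S, ReachIn D S a b

section Reach

variable {D : V → V → Prop} {S T C C' F : Set V} {a b c : V}

theorem ReachIn.refl (ha : a ∈ S) : ReachIn D S a a := ⟨ha, ha, .refl⟩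

theorem ReachIn.trans (hab : ReachIn D S a b) (hbc : ReachIn D S b c) : ReachIn D S a c :=
  ⟨hab.1, hbc.2.1, hab.2.2.trans hbc.2.2⟩

theorem ReachIn.mono (hST : S ⊆ T) (hab : ReachIn D S a b) : ReachIn D T a b :=
  ⟨hST hab.1, hST hab.2.1, ReflTransGen.mono (fun _ _ h => ⟨hST h.1, h.2⟩) _ _ hab.2.2⟩

theorem ReachIn.exists_finite (hab : ReachIn D S a b) :
    ∃ F : Set V, F.Finite ∧ F ⊆ S ∧ ReachIn D F a b := by
  obtain ⟨ha, -, hab⟩ := hab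
  induction hab with
  | refl => exact ⟨{a}, finite_singleton a, singleton_subset_iff.2 ha, .refl rfl⟩
  | @tail b c _ hbc ih =>
    obtain ⟨F, hF, hFS, hab⟩ := ih
    exact ⟨insert c F, hF.insert c, insert_subset hbc.1 hFS,
      (hab.mono (subset_insert c F)).trans ⟨mem_insert_of_mem c hab.2.1, mem_insert c F,
        .single ⟨mem_insert c F, hbc.2⟩⟩⟩

namespace IsSCCIn

theorem subset (hC : IsSCCIn D S C) : C ⊆ S := by
  obtain ⟨a, -, rfl⟩ := hC
  exact fun b hb => hb.1.2.1

theorem mem_iff (hC : IsSCCIn D S C) (ha : a ∈ C) :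
    b ∈ C ↔ ReachIn D S a b ∧ ReachIn D S b a := by
  obtain ⟨c, -, rfl⟩ := hC
  exact ⟨fun hb => ⟨ha.2.trans hb.1, hb.2.trans ha.1⟩,
    fun hb => ⟨ha.1.trans hb.1, hb.2.trans ha.2⟩⟩

theorem eq_of_mem (hC : IsSCCIn D S C) (hC' : IsSCCIn D S C') (ha : a ∈ C) (ha' : a ∈ C') :
    C = C' := by
  ext b
  rw [hC.mem_iff ha, hC'.mem_iff ha']

theorem stronglyConnectedOn (hC : IsSCCIn D S C) : StronglyConnectedOn D C := by
  intro a ha b hb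
  have haS := hC.subset ha
  suffices ∀ c, ReflTransGen (fun x y => y ∈ S ∧ D x y) a c →
      ReflTransGen (fun x y => y ∈ S ∧ D x y) c a →
      ReflTransGen (fun x y => y ∈ C ∧ D x y) a c from
    ⟨ha, hb, this b ((hC.mem_iff ha).1 hb).1.2.2 ((hC.mem_iff ha).1 hb).2.2.2⟩
  intro c hac hca
  induction hac with
  | refl => exact .refl
  | @tail b c hab hbc ih =>
    have hcC : c ∈ C :=
      (hC.mem_iff ha).2 ⟨⟨haS, hbc.1, hab.tail hbc⟩, ⟨hbc.1, haS, hca⟩⟩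
    exact (ih (.head hbc hca)).tail ⟨hcC, hbc.2⟩

end IsSCCIn

theorem StronglyConnectedOn.subset_of_mem (hF : StronglyConnectedOn D F) (hFS : F ⊆ S)
    (hC : IsSCCIn D S C) (haF : a ∈ F) (haC : a ∈ C) : F ⊆ C := fun b hb =>
  (hC.mem_iff haC).2 ⟨(hF a haF b hb).mono hFS, (hF b hb a haF).mono hFS⟩

theorem IsSCCIn.exists_finite_stronglyConnectedOn (hC : IsSCCIn D S C) {A : Set V} (hA : A.Finite)
    (hAC : A ⊆ C) (hc : c ∈ C) :
    ∃ F : Set V, F.Finite ∧ StronglyConnectedOn D F ∧ insert c A ⊆ F ∧ F ⊆ C := by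
  have hloop : ∀ a ∈ A, ∃ G : Set V, G.Finite ∧ G ⊆ S ∧ ReachIn D G c a ∧ ReachIn D G a c := by
    intro a ha
    obtain ⟨hca, hac⟩ := (hC.mem_iff hc).1 (hAC ha)
    obtain ⟨G₁, hG₁, hG₁S, hca⟩ := hca.exists_finite
    obtain ⟨G₂, hG₂, hG₂S, hac⟩ := hac.exists_finite
    exact ⟨G₁ ∪ G₂, hG₁.union hG₂, union_subset hG₁S hG₂S,
      hca.mono subset_union_left, hac.mono subset_union_right⟩
  choose! G hG hGS hcG hGc using hloop
  set Ω := insert c (⋃ a ∈ A, G a)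
  have hGΩ : ∀ a ∈ A, G a ⊆ Ω := fun a ha =>
    (subset_biUnion_of_mem (u := G) ha).trans (subset_insert c _)
  have hcΩ : c ∈ Ω := mem_insert c _
  have hK : IsSCCIn D Ω {b | ReachIn D Ω c b ∧ ReachIn D Ω b c} := ⟨c, hcΩ, rfl⟩
  refine ⟨_, ((hA.biUnion hG).insert c).subset hK.subset, hK.stronglyConnectedOn,
    insert_subset ⟨.refl hcΩ, .refl hcΩ⟩ fun a ha => ⟨(hcG a ha).mono (hGΩ a ha),
      (hGc a ha).mono (hGΩ a ha)⟩, ?_⟩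
  exact hK.stronglyConnectedOn.subset_of_mem
    (hK.subset.trans (insert_subset (hC.subset hc) (iUnion₂_subset hGS))) hC
    ⟨.refl hcΩ, .refl hcΩ⟩ hc

end Reach

def HasTailComponents (D : V → V → Prop) (R : ℕ → V) : Prop :=
  ∀ X : Finset V, ∃ C, IsSCCIn D ((↑X : Set V)ᶜ) C ∧ HasTailIn R C

/-- `C(X, R)`: the strong component of `D - X` containing a tail of `R` (empty if none does). -/
def tailComp (D : V → V → Prop) (R : ℕ → V) (X : Finset V) : Set V :=
  ⋃₀ {C | IsSCCIn D ((↑X : Set V)ᶜ) C ∧ HasTailIn R C}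

section TailComp

variable {D : V → V → Prop} {R : ℕ → V} {S C C' : Set V} {X Y : Finset V}

theorem IsSCCIn.eq_of_hasTailIn (hC : IsSCCIn D S C) (hC' : IsSCCIn D S C')
    (hR : HasTailIn R C) (hR' : HasTailIn R C') : C = C' := by
  obtain ⟨m, hm⟩ := hR
  obtain ⟨m', hm'⟩ := hR'
  exact hC.eq_of_mem hC' (hm _ (le_max_left m m')) (hm' _ (le_max_right m m'))

theorem tailComp_eq (hC : IsSCCIn D ((↑X : Set V)ᶜ) C) (hR : HasTailIn R C) :
    tailComp D R X = C :=
  subset_antisymm (sUnion_subset fun _ h => (hC.eq_of_hasTailIn h.1 hR h.2).symm.subset)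
    (subset_sUnion_of_mem ⟨hC, hR⟩)

theorem tailComp_subset_compl : tailComp D R X ⊆ (↑X : Set V)ᶜ :=
  sUnion_subset fun _ h => h.1.subset

theorem HasTailComponents.isSCCIn (hR : HasTailComponents D R) (X : Finset V) :
    IsSCCIn D ((↑X : Set V)ᶜ) (tailComp D R X) := by
  obtain ⟨C, hC, hRC⟩ := hR X
  rwa [tailComp_eq hC hRC]

theorem HasTailComponents.hasTailIn (hR : HasTailComponents D R) (X : Finset V) :
    HasTailIn R (tailComp D R X) := by
  obtain ⟨C, hC, hRC⟩ := hR X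
  rwa [tailComp_eq hC hRC]

theorem HasTailComponents.exists_mem (hR : HasTailComponents D R) (X : Finset V) :
    ∃ τ, R τ ∈ tailComp D R X :=
  (hR.hasTailIn X).imp fun τ h => h τ le_rfl

theorem HasTailComponents.tailComp_anti (hR : HasTailComponents D R) (hXY : X ⊆ Y) :
    tailComp D R Y ⊆ tailComp D R X := by
  obtain ⟨m, hm⟩ := hR.hasTailIn X
  obtain ⟨m', hm'⟩ := hR.hasTailIn Y
  exact (hR.isSCCIn Y).stronglyConnectedOn.subset_of_mem
    (tailComp_subset_compl.trans (compl_subset_compl.2 (Finset.coe_subset.2 hXY)))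
    (hR.isSCCIn X) (hm' _ (le_max_right m m')) (hm _ (le_max_left m m'))

end TailComp

theorem List.exists_split_first {α : Type*} {l : List α} (p : α → Prop) (h : ∃ x ∈ l, p x) :
    ∃ l₁ x l₂, l = l₁ ++ x :: l₂ ∧ p x ∧ ∀ y ∈ l₁, ¬ p y := by
  induction l with
  | nil => simp at h
  | cons a t ih =>
    by_cases ha : p a
    · exact ⟨[], a, t, rfl, ha, by simp⟩
    · obtain ⟨l₁, x, l₂, rfl, hx, hl₁⟩ := ih (by simpa [ha] using h)
      exact ⟨a :: l₁, x, l₂, rfl, hx, by simpa [ha] using hl₁⟩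

theorem List.exists_split_last {α : Type*} {l : List α} (p : α → Prop) (h : ∃ x ∈ l, p x) :
    ∃ l₁ x l₂, l = l₁ ++ x :: l₂ ∧ p x ∧ ∀ y ∈ l₂, ¬ p y := by
  obtain ⟨l₁, x, l₂, hl, hx, hl₁⟩ := List.exists_split_first p (l := l.reverse) (by simpa using h)
  exact ⟨l₂.reverse, x, l₁.reverse, by simpa using congrArg List.reverse hl, hx,
    by simpa using hl₁⟩

section Paths

variable {D : V → V → Prop} {S : Set V} {l l' : List V} {a b x : V}

theorem IsPathList.infix (hl : IsPathList D l) (h : l' <:+: l) (hne : l' ≠ []) :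
    IsPathList D l' :=
  ⟨hne, hl.2.1.sublist h.sublist, List.IsChain.infix hl.2.2 h⟩

theorem reachIn_of_head?_eq (hl : l.IsChain D) (ha : l.head? = some a) (hx : x ∈ l) :
    ReachIn D {y | y ∈ l} a x := by
  obtain ⟨t, rfl⟩ := List.head?_eq_some_iff.1 ha
  refine List.IsChain.induction (ReachIn D {y | y ∈ a :: t} a) _
    (List.IsChain.imp_of_mem_imp (S := fun u v => v ∈ {y | y ∈ a :: t} ∧ D u v)
      (fun _ _ _ hv h => ⟨hv, h⟩) hl)
    (fun _ _ h hu => ⟨hu.1, h.1, hu.2.2.tail h⟩) (fun _ => .refl List.mem_cons_self) x hx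

theorem reachIn_of_getLast?_eq (hl : l.IsChain D) (hb : l.getLast? = some b) (hx : x ∈ l) :
    ReachIn D {y | y ∈ l} x b := by
  obtain ⟨t, rfl⟩ := List.getLast?_eq_some_iff.1 hb
  refine List.IsChain.backwards_induction (ReachIn D {y | y ∈ t ++ [b]} · b) _
    (List.IsChain.imp_of_mem_imp (S := fun u v => u ∈ t ++ [b] ∧ v ∈ {y | y ∈ t ++ [b]} ∧ D u v)
      (fun _ _ hu hv h => ⟨hu, hv, h⟩) hl)
    (fun _ _ h hv => ⟨h.1, hv.2.1, .head h.2 hv.2.2⟩) (fun _ => ?_) x hx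
  simpa using ReachIn.refl (D := D) (by simp : b ∈ {y | y ∈ t ++ [b]})

theorem ReachIn.exists_isPathList (h : ReachIn D S a b) :
    ∃ l, IsPathList D l ∧ l.head? = some a ∧ l.getLast? = some b ∧ ∀ x ∈ l, x ∈ S := by
  obtain ⟨ha, hb, h⟩ := h
  induction h using ReflTransGen.head_induction_on with
  | refl => exact ⟨[b], ⟨by simp, List.nodup_singleton b, List.isChain_singleton b⟩, rfl, rfl,
      by simpa⟩
  | @head a c hac _ ih =>
    obtain ⟨l, ⟨-, hnd, hch⟩, hhead, hlast, hS⟩ := ih hac.1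
    by_cases hal : a ∈ l
    · -- shortcut the walk at its earlier visit to `a`
      obtain ⟨l₁, l₂, rfl⟩ := List.append_of_mem hal
      refine ⟨a :: l₂, ⟨by simp, hnd.sublist (List.sublist_append_right _ _),
        List.IsChain.infix hch (List.suffix_append _ _).isInfix⟩, rfl, ?_,
        fun x hx => hS x (by simp_all)⟩
      rwa [List.getLast?_append_of_ne_nil _ (List.cons_ne_nil a l₂)] at hlast
    · obtain ⟨t, rfl⟩ := List.head?_eq_some_iff.1 hhead
      exact ⟨a :: c :: t, ⟨by simp, List.nodup_cons.2 ⟨hal, hnd⟩,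
        List.isChain_cons_cons.2 ⟨hac.2, hch⟩⟩, rfl, by simpa using hlast, by simpa [ha] using hS⟩

end Paths

/-- One bead of a necklace with its two connecting paths, built in the layer `CA \ CB` around
the pre-bead `P` and reaching the next pre-bead `P'`. -/
structure IsNecklaceStep (D : V → V → Prop) (CA CB P P' B : Set V) (fwd bwd : List V) :
    Prop where
  finite : B.Finite
  strong : StronglyConnectedOn D B
  subset_bead : P ⊆ B
  bead_subset : B ⊆ CA \ CB
  fwd_path : IsPathList D fwd
  bwd_path : IsPathList D bwd
  fwd_head : ∀ a, fwd.head? = some a → a ∈ B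
  fwd_last : ∀ b, fwd.getLast? = some b → b ∈ P'
  bwd_head : ∀ a, bwd.head? = some a → a ∈ P'
  bwd_last : ∀ b, bwd.getLast? = some b → b ∈ B
  fwd_subset : ∀ x ∈ fwd, x ∈ CA
  bwd_subset : ∀ x ∈ bwd, x ∈ CA
  fwd_inner : ∀ x ∈ fwd.tail.dropLast, x ∉ CB ∧ x ∉ B
  bwd_inner : ∀ x ∈ bwd.tail.dropLast, x ∉ CB ∧ x ∉ B
  inner_disjoint : ∀ x ∈ fwd.tail.dropLast, x ∉ bwd.tail.dropLast

section NecklaceStep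

variable {D : V → V → Prop} {CA CB P P' Q B : Set V} {fwd bwd : List V}

theorem IsNecklaceStep.mono (h : IsNecklaceStep D CA CB P P' B fwd bwd) (hP' : P' ⊆ Q) :
    IsNecklaceStep D CA CB P Q B fwd bwd :=
  { h with
    fwd_last := fun b hb => hP' (h.fwd_last b hb)
    bwd_head := fun a ha => hP' (h.bwd_head a ha) }

variable {c t : V}

theorem StronglyConnectedOn.exists_path_to (hCA : StronglyConnectedOn D CA) (hCB : CB ⊆ CA)
    (hc : c ∈ CA) (hcCB : c ∉ CB) (ht : t ∈ CB) :
    ∃ p b, IsPathList D (p ++ [b]) ∧ p.head? = some c ∧ b ∈ CB ∧ ∀ x ∈ p, x ∈ CA \ CB := by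
  obtain ⟨W, hW, hWh, hWl, hWCA⟩ := (hCA c hc t (hCB ht)).exists_isPathList
  obtain ⟨p, b, q, rfl, hb, hp⟩ :=
    List.exists_split_first (· ∈ CB) ⟨t, List.mem_of_getLast? hWl, ht⟩
  refine ⟨p, b, hW.infix ⟨[], q, by simp⟩ (by simp), ?_, hb,
    fun x hx => ⟨hWCA x (by simp [hx]), hp x hx⟩⟩
  cases p with
  | nil => exact absurd (Option.some_injective _ hWh ▸ hb) hcCB
  | cons => simpa using hWh

theorem StronglyConnectedOn.exists_path_from (hCA : StronglyConnectedOn D CA) (hCB : CB ⊆ CA)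
    (hc : c ∈ CA) (hcCB : c ∉ CB) (ht : t ∈ CB) :
    ∃ b p, IsPathList D (b :: p) ∧ p.getLast? = some c ∧ b ∈ CB ∧ ∀ x ∈ p, x ∈ CA \ CB := by
  obtain ⟨W, hW, hWh, hWl, hWCA⟩ := (hCA t (hCB ht) c hc).exists_isPathList
  obtain ⟨q, b, p, rfl, hb, hp⟩ :=
    List.exists_split_last (· ∈ CB) ⟨t, List.mem_of_head? hWh, ht⟩
  refine ⟨b, p, hW.infix ⟨q, [], by simp⟩ (by simp), ?_, hb,
    fun x hx => ⟨hWCA x (by simp [hx]), hp x hx⟩⟩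
  cases p using List.reverseRecOn with
  | nil => exact absurd (Option.some_injective _ (by simpa using hWl) ▸ hb) hcCB
  | append_singleton => simpa [List.getLast?_cons] using hWl

/-- A common vertex of the two trimmed walks would be reachable from `c` and reach `c`
inside `Ω`, so it would lie in `K`. -/
theorem IsSCCIn.exists_splits_disjoint {Ω K : Set V} {p p' : List V} (hK : IsSCCIn D Ω K)
    (hcK : c ∈ K) (hp : p.IsChain D) (hph : p.head? = some c) (hpΩ : ∀ x ∈ p, x ∈ Ω)
    (hp' : p'.IsChain D) (hp'l : p'.getLast? = some c) (hp'Ω : ∀ x ∈ p', x ∈ Ω) :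
    ∃ p₁ a p₂ q₁ a' q₂, p = p₁ ++ a :: p₂ ∧ p' = q₁ ++ a' :: q₂ ∧ a ∈ K ∧ a' ∈ K ∧
      (∀ x ∈ p₂, x ∉ K) ∧ (∀ x ∈ q₁, x ∉ K) ∧ ∀ x ∈ p₂, x ∉ q₁ := by
  obtain ⟨p₁, a, p₂, rfl, ha, hp₂⟩ :=
    List.exists_split_last (· ∈ K) ⟨c, List.mem_of_head? hph, hcK⟩
  obtain ⟨q₁, a', q₂, rfl, ha', hq₁⟩ :=
    List.exists_split_first (· ∈ K) ⟨c, List.mem_of_getLast? hp'l, hcK⟩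
  refine ⟨p₁, a, p₂, q₁, a', q₂, rfl, rfl, ha, ha', hp₂, hq₁, fun x hx hx' => hp₂ x hx ?_⟩
  have hxp : x ∈ p₁ ++ a :: p₂ := by simp [hx]
  have hxp' : x ∈ q₁ ++ a' :: q₂ := by simp [hx']
  exact (hK.mem_iff hcK).2 ⟨(reachIn_of_head?_eq hp hph hxp).mono hpΩ,
    (reachIn_of_getLast?_eq hp' hp'l hxp').mono hp'Ω⟩

/-- The bead is the strong component of `c` in the union of `P` with a walk from `c` to its
first vertex in `CB` and a walk to `c` from its last vertex in `CB`. -/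
theorem StronglyConnectedOn.exists_isNecklaceStep (hCA : StronglyConnectedOn D CA)
    (hCB : CB ⊆ CA) (hCBne : CB.Nonempty) (hP : P.Finite) (hPs : StronglyConnectedOn D P)
    (hPCA : P ⊆ CA) (hPCB : Disjoint P CB) (hc : c ∈ P) :
    ∃ B fwd bwd, ∃ E : Set V, E.Finite ∧ E ⊆ CB ∧ IsNecklaceStep D CA CB P E B fwd bwd := by
  obtain ⟨t, ht⟩ := hCBne
  have hcCB : c ∉ CB := disjoint_left.1 hPCB hc
  obtain ⟨p, b, hpb, hph, hb, hpC⟩ := hCA.exists_path_to hCB (hPCA hc) hcCB ht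
  obtain ⟨b', p', hbp', hp'l, hb', hp'C⟩ := hCA.exists_path_from hCB (hPCA hc) hcCB ht
  set Ω := P ∪ {x | x ∈ p} ∪ {x | x ∈ p'}
  have hcΩ : c ∈ Ω := Or.inl (Or.inl hc)
  have hK : IsSCCIn D Ω {x | ReachIn D Ω c x ∧ ReachIn D Ω x c} := ⟨c, hcΩ, rfl⟩
  have hΩ : Ω ⊆ CA \ CB :=
    union_subset (union_subset (fun x hx => ⟨hPCA hx, disjoint_left.1 hPCB hx⟩) hpC) hp'C
  obtain ⟨p₁, a, p₂, q₁, a', q₂, rfl, rfl, ha, ha', hp₂, hq₁, hdisj⟩ :=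
    hK.exists_splits_disjoint ⟨.refl hcΩ, .refl hcΩ⟩
      (List.IsChain.infix hpb.2.2 (List.prefix_append _ [b]).isInfix) hph
      (fun x hx => Or.inl (Or.inr hx)) (List.IsChain.infix hbp'.2.2 (List.suffix_cons b' _).isInfix)
      hp'l (fun x hx => Or.inr hx)
  have hfwd : a :: p₂ ++ [b] <:+: p₁ ++ a :: p₂ ++ [b] := ⟨p₁, [], by simp⟩
  have hbwd : b' :: q₁ ++ [a'] <:+: b' :: (q₁ ++ a' :: q₂) := ⟨[], q₂, by simp⟩
  refine ⟨_, a :: p₂ ++ [b], b' :: q₁ ++ [a'], {b, b'}, toFinite _,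
    insert_subset hb (singleton_subset_iff.2 hb'),
    { finite := ((hP.union (List.finite_toSet _)).union (List.finite_toSet _)).subset hK.subset
      strong := hK.stronglyConnectedOn
      subset_bead := hPs.subset_of_mem (fun x hx => Or.inl (Or.inl hx)) hK hc ⟨.refl hcΩ, .refl hcΩ⟩
      bead_subset := hK.subset.trans hΩ
      fwd_path := hpb.infix hfwd (by simp)
      bwd_path := hbp'.infix hbwd (by simp)
      fwd_head := by simpa using ha
      fwd_last := by simp [List.getLast?_cons]
      bwd_head := by simp
      bwd_last := by simpa [List.getLast?_cons] using ha'
      fwd_subset := fun x hx => ?_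
      bwd_subset := fun x hx => ?_
      fwd_inner := ?_
      bwd_inner := ?_
      inner_disjoint := by simpa using hdisj }⟩
  · rcases List.mem_append.1 (hfwd.subset hx) with hx | hx
    · exact (hpC x hx).1
    · exact hCB (List.mem_singleton.1 hx ▸ hb)
  · rcases List.mem_cons.1 (hbwd.subset hx) with rfl | hx
    · exact hCB hb'
    · exact (hp'C x hx).1
  all_goals simp only [List.cons_append, List.tail_cons, List.dropLast_concat]
  · exact fun x hx => ⟨(hpC x (by simp [hx])).2, hp₂ x hx⟩
  · exact fun x hx => ⟨(hp'C x (by simp [hx])).2, hq₁ x hx⟩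

end NecklaceStep

theorem eventually_disjoint_of_pairwise_disjoint {ι α : Type*} {B : ι → Set α}
    (hB : Pairwise (Disjoint on B)) {T : Set α} (hT : T.Finite) :
    ∀ᶠ n in cofinite, Disjoint (B n) T := by
  refine Finite.eventually_cofinite_notMem (s := {n | ¬ Disjoint (B n) T}) ?_ |>.mono
    fun n hn => not_not.1 hn
  refine (hT.biUnion fun x _ => Subsingleton.finite (s := {n | x ∈ B n}) ?_).subset fun n hn => ?_
  · exact fun m hm n hn => by_contra fun hmn => disjoint_left.1 (hB hmn) hm hn
  · obtain ⟨x, hxB, hxT⟩ := not_disjoint_iff.1 hn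
    exact mem_biUnion hxT hxB

theorem Antitone.pairwise_disjoint_sdiff_succ {α : Type*} {C : ℕ → Set α} (hC : Antitone C) :
    Pairwise (Disjoint on fun n => C n \ C (n + 1)) := by
  intro m n hmn
  rcases hmn.lt_or_gt with h | h
  · exact disjoint_left.2 fun x hxm hxn => hxm.2 (hC (Nat.succ_le_of_lt h) hxn.1)
  · exact disjoint_left.2 fun x hxm hxn => hxn.2 (hC (Nat.succ_le_of_lt h) hxm.1)

section Assembly

variable {D : V → V → Prop}

theorem exists_necklace_of_isNecklaceStep {C P : ℕ → Set V} (hC : Antitone C)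
    (hP : ∀ n, (P n).Nonempty)
    (h : ∀ n, ∃ B fwd bwd, IsNecklaceStep D (C n) (C (n + 1)) (P n) (P (n + 1)) B fwd bwd) :
    ∃ N : Necklace D, (∀ n, P n ⊆ N.bead n) ∧ N.verts ⊆ C 0 := by
  choose B fwd bwd hs using h
  set L := fun n => C n \ C (n + 1)
  have hL : Pairwise (Disjoint on L) := hC.pairwise_disjoint_sdiff_succ
  have hBL : ∀ n, B n ⊆ L n := fun n => (hs n).bead_subset
  have hfwdL : ∀ n, ∀ x ∈ (fwd n).tail.dropLast, x ∈ L n ∧ x ∉ B n := fun n x hx =>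
    ⟨⟨(hs n).fwd_subset x (List.mem_of_mem_tail (List.dropLast_subset _ hx)),
      ((hs n).fwd_inner x hx).1⟩, ((hs n).fwd_inner x hx).2⟩
  have hbwdL : ∀ n, ∀ x ∈ (bwd n).tail.dropLast, x ∈ L n ∧ x ∉ B n := fun n x hx =>
    ⟨⟨(hs n).bwd_subset x (List.mem_of_mem_tail (List.dropLast_subset _ hx)),
      ((hs n).bwd_inner x hx).1⟩, ((hs n).bwd_inner x hx).2⟩
  have hnotB : ∀ n x, x ∈ L n ∧ x ∉ B n → ∀ m, x ∉ B m := fun n x hx m hxm => by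
    rcases eq_or_ne m n with rfl | hmn
    · exact hx.2 hxm
    · exact disjoint_left.1 (hL hmn) (hBL m hxm) hx.1
  have hne : ∀ m n x y, m ≠ n → x ∈ L m → y ∈ L n → x ≠ y := fun m n x y hmn hx hy hxy =>
    disjoint_left.1 (hL hmn) hx (hxy ▸ hy)
  refine ⟨{ bead := B, fwd := fwd, bwd := bwd
            bead_fin := fun n => (hs n).finite
            bead_nonempty := fun n => (hP n).mono (hs n).subset_bead
            bead_disj := fun m n hmn => (hL hmn).mono (hBL m) (hBL n)
            bead_strong := fun n => (hs n).strong
            fwd_path := fun n => (hs n).fwd_path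
            bwd_path := fun n => (hs n).bwd_path
            fwd_head := fun n => (hs n).fwd_head
            fwd_last := fun n b hb => (hs (n + 1)).subset_bead ((hs n).fwd_last b hb)
            bwd_head := fun n a ha => (hs (n + 1)).subset_bead ((hs n).bwd_head a ha)
            bwd_last := fun n => (hs n).bwd_last
            fwd_inner := fun n x hx => hnotB n x (hfwdL n x hx)
            bwd_inner := fun n x hx => hnotB n x (hbwdL n x hx)
            fwd_fwd_disj := fun m n hmn x hx hx' =>
              hne m n x x hmn (hfwdL m x hx).1 (hfwdL n x hx').1 rfl
            bwd_bwd_disj := fun m n hmn x hx hx' =>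
              hne m n x x hmn (hbwdL m x hx).1 (hbwdL n x hx').1 rfl
            fwd_bwd_disj := fun m n x hx hx' => by
              rcases eq_or_ne m n with rfl | hmn
              · exact (hs m).inner_disjoint x hx hx'
              · exact hne m n x x hmn (hfwdL m x hx).1 (hbwdL n x hx').1 rfl },
    fun n => (hs n).subset_bead, ?_⟩
  rintro x (hx | ⟨n, hx | hx⟩)
  · obtain ⟨n, hn⟩ := mem_iUnion.1 hx
    exact hC (Nat.zero_le n) (hBL n hn).1
  · exact hC (Nat.zero_le n) ((hs n).fwd_subset x hx)
  · exact hC (Nat.zero_le n) ((hs n).bwd_subset x hx)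

theorem Necklace.represents_of_exists_mem {N : Necklace D} {R : ℕ → V} (hR : HasTailComponents D R)
    (hN : ∀ n, ∃ τ, R τ ∈ N.bead n) : NecklaceRepresents N R := by
  intro X
  refine ⟨tailComp D R X, hR.isSCCIn X, hR.hasTailIn X, ?_⟩
  obtain ⟨M, hM⟩ := hR.hasTailIn X
  have hdisj {T : Set V} (hT : T.Finite) : ∀ᶠ n in atTop, Disjoint (N.bead n) T :=
    Nat.cofinite_eq_atTop ▸ eventually_disjoint_of_pairwise_disjoint N.bead_disj hT
  obtain ⟨n₀, hn₀⟩ := eventually_atTop.1 ((hdisj X.finite_toSet).and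
    (hdisj ((finite_Iio M).image R)))
  refine ⟨n₀, fun n hn => ?_⟩
  obtain ⟨hX, hRM⟩ := hn₀ n hn
  obtain ⟨τ, hτ⟩ := hN n
  have hMτ : M ≤ τ := not_lt.1 fun h => disjoint_left.1 hRM hτ ⟨τ, h, rfl⟩
  exact StronglyConnectedOn.subset_of_mem (N.bead_strong n) (fun x hx => disjoint_left.1 hX hx)
    (hR.isSCCIn X) hτ (hM τ hMτ)

end Assembly

theorem exists_seq_of_forall_exists {α : Type*} {p : α → Prop} {r : α → α → Prop}
    (h₀ : ∃ a, p a) (h : ∀ a, p a → ∃ b, p b ∧ r a b) :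
    ∃ f : ℕ → α, ∀ n, p (f n) ∧ r (f n) (f (n + 1)) := by
  obtain ⟨a, ha⟩ := h₀
  choose! g hg using h
  have hp : ∀ n, p (g^[n] a) := fun n => by
    induction n with
    | zero => exact ha
    | succ n ih => rw [iterate_succ_apply']; exact (hg _ ih).1
  refine ⟨fun n => g^[n] a, fun n => ⟨hp n, ?_⟩⟩
  simpa only [iterate_succ_apply'] using (hg _ (hp n)).2

/-- A seed from which the bead of a necklace for the end of `R` is grown, inside `C(Z, R)`. -/
structure IsPreBead (D : V → V → Prop) (R : ℕ → V) (Z : Finset V) (P : Set V) : Prop where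
  finite : P.Finite
  strong : StronglyConnectedOn D P
  subset : P ⊆ tailComp D R Z
  exists_mem : ∃ τ, R τ ∈ P

section PreBead

variable {D : V → V → Prop} {R : ℕ → V} {Z Z' : Finset V} {P A : Set V}

theorem HasTailComponents.exists_isPreBead (hR : HasTailComponents D R) (Z : Finset V)
    (hA : A.Finite) (hAZ : A ⊆ tailComp D R Z) : ∃ P, IsPreBead D R Z P ∧ A ⊆ P := by
  obtain ⟨τ, hτ⟩ := hR.exists_mem Z
  obtain ⟨P, hP, hPs, hAP, hPZ⟩ := (hR.isSCCIn Z).exists_finite_stronglyConnectedOn hA hAZ hτ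
  exact ⟨P, ⟨hP, hPs, hPZ, τ, hAP (mem_insert _ _)⟩, (subset_insert _ _).trans hAP⟩

theorem IsPreBead.nonempty (hP : IsPreBead D R Z P) : P.Nonempty :=
  let ⟨_, h⟩ := hP.exists_mem; ⟨_, h⟩

theorem IsPreBead.exists_isNecklaceStep (hR : HasTailComponents D R) (hP : IsPreBead D R Z P)
    (hZ : Z ⊆ Z') (hPZ : P ⊆ ↑Z') (hA : A.Finite) (hAZ : A ⊆ tailComp D R Z') :
    ∃ P', IsPreBead D R Z' P' ∧ A ⊆ P' ∧
      ∃ B fwd bwd, IsNecklaceStep D (tailComp D R Z) (tailComp D R Z') P P' B fwd bwd := by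
  obtain ⟨τ, hτ⟩ := hP.exists_mem
  obtain ⟨τ', hτ'⟩ := hR.exists_mem Z'
  obtain ⟨B, fwd, bwd, E, hE, hEZ, hstep⟩ :=
    (hR.isSCCIn Z).stronglyConnectedOn.exists_isNecklaceStep (hR.tailComp_anti hZ) ⟨_, hτ'⟩
      hP.finite hP.strong hP.subset
      (disjoint_left.2 fun x hx hx' => tailComp_subset_compl hx' (hPZ hx)) hτ
  obtain ⟨P', hP', hAP'⟩ := hR.exists_isPreBead Z' (hA.union hE) (union_subset hAZ hEZ)
  exact ⟨P', hP', subset_union_left.trans hAP', B, fwd, bwd,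
    hstep.mono (subset_union_right.trans hAP')⟩

end PreBead

section LimitEdge

variable {D : V → V → Prop} {Rω Rη : ℕ → V}

theorem exists_disjoint_tailComp (hω : HasTailComponents D Rω) (hη : HasTailComponents D Rη)
    (hne : ¬ EndEquiv D Rω Rη) : ∃ X₀, Disjoint (tailComp D Rω X₀) (tailComp D Rη X₀) := by
  by_contra! h
  refine hne fun X => ⟨tailComp D Rω X, hω.isSCCIn X, hω.hasTailIn X, ?_⟩
  obtain ⟨x, hxω, hxη⟩ := not_disjoint_iff.1 (h X)
  rw [(hω.isSCCIn X).eq_of_mem (hη.isSCCIn X) hxω hxη]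
  exact hη.hasTailIn X

theorem LimitEdgeEE.exists_edge (hLim : LimitEdgeEE D Rω Rη) (hω : HasTailComponents D Rω)
    (hη : HasTailComponents D Rη) {Z : Finset V}
    (hZ : Disjoint (tailComp D Rω Z) (tailComp D Rη Z)) :
    ∃ a ∈ tailComp D Rω Z, ∃ b ∈ tailComp D Rη Z, D a b := by
  obtain ⟨τ, hτ⟩ := hω.exists_mem Z
  exact hLim Z _ _ (hω.isSCCIn Z) (hω.hasTailIn Z) (hη.isSCCIn Z) (hη.hasTailIn Z)
    fun h => disjoint_left.1 hZ hτ (h ▸ hτ)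

theorem LimitEdgeEE.of_necklaces {Nω Nη : Necklace D} (hω : NecklaceRepresents Nω Rω)
    (hη : NecklaceRepresents Nη Rη) (hedge : ∀ n, ∃ a ∈ Nω.bead n, ∃ b ∈ Nη.bead n, D a b) :
    LimitEdgeEE D Rω Rη := by
  intro X C C' hC hωC hC' hηC' _
  obtain ⟨Cω, hCω, hωCω, m, hm⟩ := hω X
  obtain ⟨Cη, hCη, hηCη, m', hm'⟩ := hη X
  obtain rfl := hC.eq_of_hasTailIn hCω hωC hωCω
  obtain rfl := hC'.eq_of_hasTailIn hCη hηC' hηCη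
  obtain ⟨a, ha, b, hb, hab⟩ := hedge (max m m')
  exact ⟨a, hm _ (le_max_left m m') ha, b, hm' _ (le_max_right m m') hb, hab⟩

end LimitEdge

structure Stage (V : Type*) where
  sep : Finset V
  preω : Set V
  preη : Set V

namespace Stage

variable {D : V → V → Prop} {Rω Rη : ℕ → V} {X₀ : Finset V}

structure IsValid (D : V → V → Prop) (Rω Rη : ℕ → V) (X₀ : Finset V) (s : Stage V) : Prop where
  subset_sep : X₀ ⊆ s.sep
  preω : IsPreBead D Rω s.sep s.preω
  preη : IsPreBead D Rη s.sep s.preη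
  edge : ∃ a ∈ s.preω, ∃ b ∈ s.preη, D a b

structure Step (D : V → V → Prop) (Rω Rη : ℕ → V) (s t : Stage V) : Prop where
  sep_subset : s.sep ⊆ t.sep
  stepω : ∃ B fwd bwd,
    IsNecklaceStep D (tailComp D Rω s.sep) (tailComp D Rω t.sep) s.preω t.preω B fwd bwd
  stepη : ∃ B fwd bwd,
    IsNecklaceStep D (tailComp D Rη s.sep) (tailComp D Rη t.sep) s.preη t.preη B fwd bwd

theorem exists_isValid (hLim : LimitEdgeEE D Rω Rη) (hω : HasTailComponents D Rω)
    (hη : HasTailComponents D Rη) (hX₀ : Disjoint (tailComp D Rω X₀) (tailComp D Rη X₀)) :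
    ∃ s : Stage V, s.IsValid D Rω Rη X₀ := by
  obtain ⟨a, ha, b, hb, hab⟩ := hLim.exists_edge hω hη hX₀
  obtain ⟨Pω, hPω, haP⟩ :=
    hω.exists_isPreBead X₀ (finite_singleton a) (singleton_subset_iff.2 ha)
  obtain ⟨Pη, hPη, hbP⟩ :=
    hη.exists_isPreBead X₀ (finite_singleton b) (singleton_subset_iff.2 hb)
  exact ⟨⟨X₀, Pω, Pη⟩, subset_rfl, hPω, hPη, a, haP rfl, b, hbP rfl, hab⟩

/-- The next separator swallows both current pre-beads, which pushes the next beads past them. -/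
theorem IsValid.exists_step (hLim : LimitEdgeEE D Rω Rη) (hω : HasTailComponents D Rω)
    (hη : HasTailComponents D Rη) (hX₀ : Disjoint (tailComp D Rω X₀) (tailComp D Rη X₀))
    {s : Stage V} (hs : s.IsValid D Rω Rη X₀) :
    ∃ t : Stage V, t.IsValid D Rω Rη X₀ ∧ s.Step D Rω Rη t := by
  classical
  set Z' := s.sep ∪ hs.preω.finite.toFinset ∪ hs.preη.finite.toFinset
  have hsZ' : s.sep ⊆ Z' := Finset.subset_union_left.trans Finset.subset_union_left
  have hX₀Z' : X₀ ⊆ Z' := hs.subset_sep.trans hsZ'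
  obtain ⟨a, ha, b, hb, hab⟩ := hLim.exists_edge hω hη
    (hX₀.mono (hω.tailComp_anti hX₀Z') (hη.tailComp_anti hX₀Z'))
  obtain ⟨Pω, hPω, haP, hstepω⟩ := hs.preω.exists_isNecklaceStep hω hsZ'
    (fun x hx => by simp [Z', hx]) (finite_singleton a) (singleton_subset_iff.2 ha)
  obtain ⟨Pη, hPη, hbP, hstepη⟩ := hs.preη.exists_isNecklaceStep hη hsZ'
    (fun x hx => by simp [Z', hx]) (finite_singleton b) (singleton_subset_iff.2 hb)
  exact ⟨⟨Z', Pω, Pη⟩, ⟨hX₀Z', hPω, hPη, a, haP rfl, b, hbP rfl, hab⟩, hsZ', hstepω, hstepη⟩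

end Stage

theorem LimitEdgeEE.exists_necklaces {D : V → V → Prop} {Rω Rη : ℕ → V}
    (hω : HasTailComponents D Rω) (hη : HasTailComponents D Rη) (hne : ¬ EndEquiv D Rω Rη)
    (hLim : LimitEdgeEE D Rω Rη) :
    ∃ (Nω Nη : Necklace D), NecklaceRepresents Nω Rω ∧ NecklaceRepresents Nη Rη ∧
      Disjoint Nω.verts Nη.verts ∧ ∀ n, ∃ a ∈ Nω.bead n, ∃ b ∈ Nη.bead n, D a b := by
  obtain ⟨X₀, hX₀⟩ := exists_disjoint_tailComp hω hη hne
  obtain ⟨s, hs⟩ := exists_seq_of_forall_exists (Stage.exists_isValid hLim hω hη hX₀)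
    fun _ => Stage.IsValid.exists_step hLim hω hη hX₀
  have hsep : Monotone fun n => (s n).sep := monotone_nat_of_le_succ fun n => (hs n).2.sep_subset
  obtain ⟨Nω, hPNω, hNω⟩ := exists_necklace_of_isNecklaceStep
    (C := fun n => tailComp D Rω (s n).sep) (fun _ _ h => hω.tailComp_anti (hsep h))
    (fun n => (hs n).1.preω.nonempty) fun n => (hs n).2.stepω
  obtain ⟨Nη, hPNη, hNη⟩ := exists_necklace_of_isNecklaceStep
    (C := fun n => tailComp D Rη (s n).sep) (fun _ _ h => hη.tailComp_anti (hsep h))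
    (fun n => (hs n).1.preη.nonempty) fun n => (hs n).2.stepη
  refine ⟨Nω, Nη, Nω.represents_of_exists_mem hω fun n => ?_,
    Nη.represents_of_exists_mem hη fun n => ?_, ?_, fun n => ?_⟩
  · exact (hs n).1.preω.exists_mem.imp fun _ h => hPNω n h
  · exact (hs n).1.preη.exists_mem.imp fun _ h => hPNη n h
  · exact (hX₀.mono (hω.tailComp_anti (hs 0).1.subset_sep)
      (hη.tailComp_anti (hs 0).1.subset_sep)).mono hNω hNη
  · obtain ⟨a, ha, b, hb, hab⟩ := (hs n).1.edge
    exact ⟨a, hPNω n ha, b, hPNη n hb, hab⟩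

/-- `D` has a limit edge between two distinct ends iff there are disjoint necklaces
representing them whose `n`-th beads are joined by an edge, for every `n`. -/
theorem limit_edge_iff_necklaces (D : V → V → Prop) (Rω Rη : ℕ → V)
    (hω : Solid D Rω) (hη : Solid D Rη) (hne : ¬ EndEquiv D Rω Rη) :
    LimitEdgeEE D Rω Rη ↔
      ∃ (Nω Nη : Necklace D), NecklaceRepresents Nω Rω ∧ NecklaceRepresents Nη Rη ∧
        Disjoint Nω.verts Nη.verts ∧
        ∀ n, ∃ a ∈ Nω.bead n, ∃ b ∈ Nη.bead n, D a b :=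
  ⟨LimitEdgeEE.exists_necklaces hω.2 hη.2 hne,
    fun ⟨_, _, hNω, hNη, _, hedge⟩ => .of_necklaces hNω hNη hedge⟩
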